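/- Assume the positivity condition: l_j − L_j(τ) > 0 for every τ ∈ ℝ^ℓ and every j. Then for every H ∈ ℝ^ℓ and every β > 0: ∫_{ℝ^ℓ} e^{−β ⟨H, J(τ)⟩} · det( ∂J_j/∂τ_i )(τ) dτ = ∫_Δ e^{−β ⟨H, x⟩} dx, where the right-hand side is the Lebesgue integral over the moment polytope Δ := { x ∈ ℝ^ℓ : 0 ≤ x_j ≤ l_j − Σ_{i<j} c_{ji} x_i for all j }. -/

import Mathlib

/-!
In the coordinates `σ = Φ⁻¹(τ)` the potential is `∑ lᵢ K(σᵢ)`; differentiating it through the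
unitriangular map `Φ` gives the triangular recursion `Jᵢ(Φ σ) = (lᵢ - Lᵢ) 𝒥(σᵢ)`. Hence
`σ ↦ J(Φ σ)` has a lower triangular Jacobian with positive diagonal, and since `det DΦ = 1` the
action map `J` has positive Jacobian determinant everywhere. The same recursion, with
`0 < 𝒥 < 1` and `lᵢ - Lᵢ > 0`, shows that `J` is injective with image the open polytope, so the
change of variables formula for `J` computes the left side as the integral over the open
polytope, which differs from `Δ` by finitely many hyperplanes.
-/

open Real Finset

noncomputable section

/-- `K(t) = log(1 + e^{2t})`. -/
def Kfun (t : ℝ) : ℝ := Real.log (1 + Real.exp (2 * t))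

/-- `𝒥(t) = e^{2t}/(1 + e^{2t})`. -/
def Jfun (t : ℝ) : ℝ := Real.exp (2 * t) / (1 + Real.exp (2 * t))

/-- The coordinate change `Φ(σ)_i = σ_i + (1/2)·Σ_{j>i} c_{ji} K(σ_j)`. -/
def Phi {ℓ : ℕ} (c : Fin ℓ → Fin ℓ → ℤ) (σ : Fin ℓ → ℝ) : Fin ℓ → ℝ :=
  fun i => σ i + (1 / 2) * ∑ j ∈ Finset.univ.filter (fun j => i < j), (c j i : ℝ) * Kfun (σ j)

/-- The inverse of the coordinate change `Φ`. -/
def PhiInv {ℓ : ℕ} (c : Fin ℓ → Fin ℓ → ℤ) : (Fin ℓ → ℝ) → (Fin ℓ → ℝ) :=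
  Function.invFun (Phi c)

/-- The Kähler potential `K_λ(τ) = Σ_i l_i K(τ̃_i)`, where `τ̃ = Φ⁻¹(τ)`. -/
def Klam {ℓ : ℕ} (l : Fin ℓ → ℤ) (c : Fin ℓ → Fin ℓ → ℤ) (τ : Fin ℓ → ℝ) : ℝ :=
  ∑ i, (l i : ℝ) * Kfun (PhiInv c τ i)

/-- The action variables `J_j(τ) = (1/2)·∂K_λ/∂τ_j`. -/
def Jact {ℓ : ℕ} (l : Fin ℓ → ℤ) (c : Fin ℓ → Fin ℓ → ℤ) (j : Fin ℓ) (τ : Fin ℓ → ℝ) : ℝ :=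
  (1 / 2) * fderiv ℝ (Klam l c) τ (Pi.single j 1)

/-- `L_j(τ) = Σ_{i<j} c_{ji} J_i(τ)`. -/
def Lfun {ℓ : ℕ} (l : Fin ℓ → ℤ) (c : Fin ℓ → Fin ℓ → ℤ) (j : Fin ℓ) (τ : Fin ℓ → ℝ) : ℝ :=
  ∑ i ∈ Finset.univ.filter (fun i => i < j), (c j i : ℝ) * Jact l c i τ

open MeasureTheory

section Jacobian

variable {ι κ η E : Type*} [Fintype ι] [DecidableEq ι] [Fintype κ] [DecidableEq κ]
  [NormedAddCommGroup E] [NormedSpace ℝ E]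

lemma fderiv_comp_apply_eq_sum {f : (ι → ℝ) → ℝ} {F : E → ι → ℝ} {x : E}
    (hf : DifferentiableAt ℝ f (F x)) (hF : DifferentiableAt ℝ F x) (v : E) :
    fderiv ℝ (fun y => f (F y)) x v =
      ∑ m, fderiv ℝ f (F x) (Pi.single m 1) * fderiv ℝ (fun y => F y m) x v := by
  rw [fderiv_fun_comp x hf hF, ContinuousLinearMap.comp_apply]
  conv_lhs => rw [← ContinuousLinearMap.coe_coe, LinearMap.pi_apply_eq_sum_univ]
  refine Finset.sum_congr rfl fun m _ => ?_
  rw [fderiv_apply hF, smul_eq_mul, mul_comm, ContinuousLinearMap.coe_coe]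
  congr 2
  funext j
  simp only [Pi.single_apply, eq_comm]

def jacobian (F : (ι → ℝ) → κ → ℝ) (x : ι → ℝ) : Matrix κ ι ℝ :=
  Matrix.of fun i k => fderiv ℝ (fun y => F y i) x (Pi.single k 1)

lemma jacobian_comp {F : (κ → ℝ) → η → ℝ} {G : (ι → ℝ) → κ → ℝ} {x : ι → ℝ}
    (hF : DifferentiableAt ℝ F (G x)) (hG : DifferentiableAt ℝ G x) :
    jacobian (fun y => F (G y)) x = jacobian F (G x) * jacobian G x := by
  ext i k
  exact fderiv_comp_apply_eq_sum (differentiableAt_pi.1 hF i) hG _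

lemma det_fderiv_eq_det_jacobian {F : (ι → ℝ) → ι → ℝ} {x : ι → ℝ}
    (hF : DifferentiableAt ℝ F x) : (fderiv ℝ F x).det = (jacobian F x).det := by
  rw [ContinuousLinearMap.det, ← LinearMap.det_toMatrix']
  congr 1
  ext i k
  rw [LinearMap.toMatrix'_apply, jacobian, Matrix.of_apply, fderiv_apply hF]
  rfl

end Jacobian

lemma addHaar_setOf_linearMap_eq {E : Type*} [NormedAddCommGroup E] [NormedSpace ℝ E]
    [MeasurableSpace E] [BorelSpace E] [FiniteDimensional ℝ E] (μ : Measure E)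
    [μ.IsAddHaarMeasure] {f : E →ₗ[ℝ] ℝ} {u : E} (hu : f u ≠ 0) (a : ℝ) :
    μ {x | f x = a} = 0 := by
  have hlevel : {x | f x = a} = (· + -((a / f u) • u)) ⁻¹' (LinearMap.ker f) := by
    ext x
    simp [hu, ← sub_eq_add_neg, sub_eq_zero]
  rw [hlevel, measure_preimage_add_right]
  exact Measure.addHaar_submodule μ _ fun h => hu (LinearMap.ker_eq_top.1 h ▸ rfl)

lemma Jfun_eq_sigmoid (t : ℝ) : Jfun t = sigmoid (2 * t) := by
  rw [Jfun, sigmoid_def, exp_neg]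
  field_simp
  ring

lemma range_Jfun : Set.range Jfun = Set.Ioo 0 1 := by
  rw [← range_sigmoid, funext Jfun_eq_sigmoid]
  exact (Function.Surjective.range_comp (fun s => ⟨s / 2, by ring_nf⟩) sigmoid)

lemma Jfun_mem_Ioo (t : ℝ) : Jfun t ∈ Set.Ioo 0 1 :=
  range_Jfun ▸ Set.mem_range_self t

lemma Jfun_injective : Function.Injective Jfun := fun s t h => by
  simpa [Jfun_eq_sigmoid] using h

lemma hasDerivAt_Jfun (t : ℝ) : HasDerivAt Jfun (2 * (Jfun t * (1 - Jfun t))) t := by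
  rw [funext Jfun_eq_sigmoid, mul_comm]
  exact (hasDerivAt_sigmoid _).comp t ((hasDerivAt_id t).const_mul 2 |>.congr_deriv (mul_one 2))

lemma hasDerivAt_Kfun (t : ℝ) : HasDerivAt Kfun (2 * Jfun t) t := by
  have hexp : HasDerivAt (fun t => 1 + exp (2 * t)) (exp (2 * t) * 2) t :=
    (((hasDerivAt_id t).const_mul 2).exp.congr_deriv (by simp)).const_add 1
  refine (hexp.log (by positivity)).congr_deriv ?_
  rw [Jfun]
  ring

lemma contDiff_Kfun {n : WithTop ℕ∞} : ContDiff ℝ n Kfun :=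
  (contDiff_const.add (contDiff_const.mul contDiff_id).exp).log fun t => by positivity

lemma hasFDerivAt_Kfun_apply {ι : Type*} [Fintype ι] (σ : ι → ℝ) (j : ι) :
    HasFDerivAt (fun σ : ι → ℝ => Kfun (σ j))
      ((2 * Jfun (σ j)) • (ContinuousLinearMap.proj j : (ι → ℝ) →L[ℝ] ℝ)) σ :=
  (hasDerivAt_Kfun (σ j)).comp_hasFDerivAt (f := fun σ : ι → ℝ => σ j) σ (hasFDerivAt_apply j σ)

/-- An explicit inverse of `Phi`, by back-substitution; `PhiInv` is only `Function.invFun`. -/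
def Psi {ℓ : ℕ} (c : Fin ℓ → Fin ℓ → ℤ) (τ : Fin ℓ → ℝ) (i : Fin ℓ) : ℝ :=
  τ i - (1 / 2) * ∑ j ∈ (Finset.univ.filter (fun j => i < j)).attach,
    (c j.1 i : ℝ) * Kfun (Psi c τ j.1)
termination_by ℓ - i.1
decreasing_by
  have hj := (Finset.mem_filter.1 j.2).2
  omega

section Inverse

variable {ℓ : ℕ} (c : Fin ℓ → Fin ℓ → ℤ)

lemma Psi_eq (τ : Fin ℓ → ℝ) (i : Fin ℓ) :
    Psi c τ i = τ i - (1 / 2) * ∑ j ∈ Finset.univ.filter (fun j => i < j),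
      (c j i : ℝ) * Kfun (Psi c τ j) := by
  rw [Psi, Finset.sum_attach _ (fun j => (c j i : ℝ) * Kfun (Psi c τ j))]

lemma Phi_Psi (τ : Fin ℓ → ℝ) : Phi c (Psi c τ) = τ := by
  funext i
  rw [Phi, Psi_eq]
  ring

lemma Psi_Phi (σ : Fin ℓ → ℝ) : Psi c (Phi c σ) = σ := by
  funext i
  induction i using WellFoundedGT.induction with
  | _ i ih =>
    rw [Psi_eq, Finset.sum_congr rfl fun j hj => by rw [ih j (Finset.mem_filter.1 hj).2], Phi]
    ring

lemma PhiInv_eq_Psi : PhiInv c = Psi c := by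
  funext τ
  conv_lhs => rw [← Phi_Psi c τ]
  exact Function.leftInverse_invFun (Function.LeftInverse.injective (Psi_Phi c)) _

lemma contDiff_Psi_apply {n : WithTop ℕ∞} (i : Fin ℓ) : ContDiff ℝ n fun τ => Psi c τ i := by
  induction i using WellFoundedGT.induction with
  | _ i ih =>
    simp_rw [Psi_eq c _ i]
    exact (contDiff_apply ℝ ℝ i).sub <| contDiff_const.mul <| ContDiff.sum fun j hj =>
      contDiff_const.mul (contDiff_Kfun.comp (ih j (Finset.mem_filter.1 hj).2))

lemma differentiable_Phi : Differentiable ℝ (Phi c) :=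
  differentiable_pi.2 fun i => (differentiable_apply i).add <| (differentiable_const _).mul <|
    Differentiable.fun_sum fun j _ =>
      (differentiable_const _).mul (contDiff_Kfun.differentiable_one.comp (differentiable_apply j))

lemma fderiv_Phi_apply_single (σ : Fin ℓ → ℝ) (m k : Fin ℓ) :
    fderiv ℝ (fun σ => Phi c σ m) σ (Pi.single k 1) =
      (if m = k then 1 else 0) + if m < k then (c k m : ℝ) * Jfun (σ k) else 0 := by
  have hPhi : HasFDerivAt (fun σ => Phi c σ m) _ σ :=
    (hasFDerivAt_apply m σ).add <| (HasFDerivAt.fun_sum (u := Finset.univ.filter (m < ·))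
      fun j _ => (hasFDerivAt_Kfun_apply σ j).const_mul (c j m : ℝ)).const_mul (1 / 2 : ℝ)
  rw [hPhi.fderiv]
  simp [Pi.single_apply, Finset.sum_ite_eq', eq_comm (a := m)]
  split_ifs <;> ring

end Inverse

section Action

variable {ℓ : ℕ} (l : Fin ℓ → ℤ) (c : Fin ℓ → Fin ℓ → ℤ)

lemma contDiff_Klam {n : WithTop ℕ∞} : ContDiff ℝ n (Klam l c) := by
  unfold Klam
  simp_rw [PhiInv_eq_Psi]
  exact ContDiff.sum fun i _ => contDiff_const.mul (contDiff_Kfun.comp (contDiff_Psi_apply c i))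

lemma Klam_Phi (σ : Fin ℓ → ℝ) : Klam l c (Phi c σ) = ∑ i, (l i : ℝ) * Kfun (σ i) := by
  rw [Klam, PhiInv_eq_Psi, Psi_Phi]

lemma differentiable_Jact (j : Fin ℓ) : Differentiable ℝ (Jact l c j) :=
  (differentiable_const _).mul <|
    ((contDiff_Klam l c).fderiv_right (m := 1) le_rfl).differentiable_one.clm_apply
      (differentiable_const _)

def Jmap (τ : Fin ℓ → ℝ) : Fin ℓ → ℝ := fun i => Jact l c i τ

lemma differentiable_Jmap : Differentiable ℝ (Jmap l c) :=
  differentiable_pi.2 (differentiable_Jact l c)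

lemma Lfun_congr {τ τ' : Fin ℓ → ℝ} (i : Fin ℓ) (h : ∀ j < i, Jact l c j τ = Jact l c j τ') :
    Lfun l c i τ = Lfun l c i τ' :=
  Finset.sum_congr rfl fun j hj => by rw [h j (Finset.mem_filter.1 hj).2]

lemma Jact_Phi (σ : Fin ℓ → ℝ) (i : Fin ℓ) :
    Jact l c i (Phi c σ) = ((l i : ℝ) - Lfun l c i (Phi c σ)) * Jfun (σ i) := by
  have hV : fderiv ℝ (fun σ => Klam l c (Phi c σ)) σ (Pi.single i 1) =
      2 * (l i : ℝ) * Jfun (σ i) := by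
    simp_rw [Klam_Phi]
    have hsum := HasFDerivAt.fun_sum (u := Finset.univ) fun m _ =>
      (hasFDerivAt_Kfun_apply σ m).const_mul (l m : ℝ)
    rw [hsum.fderiv]
    simp [Pi.single_apply]
    ring
  rw [fderiv_comp_apply_eq_sum ((contDiff_Klam l c).differentiable_one _)
    (differentiable_Phi c σ)] at hV
  simp_rw [fderiv_Phi_apply_single, mul_add, Finset.sum_add_distrib, mul_ite, mul_one, mul_zero,
    Finset.sum_ite_eq', Finset.mem_univ, if_true, ← Finset.sum_filter] at hV
  have hL : 2 * Lfun l c i (Phi c σ) * Jfun (σ i) = ∑ m ∈ Finset.univ.filter (· < i),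
      fderiv ℝ (Klam l c) (Phi c σ) (Pi.single m 1) * ((c i m : ℝ) * Jfun (σ i)) := by
    rw [Lfun, Finset.mul_sum, Finset.sum_mul]
    exact Finset.sum_congr rfl fun m _ => by rw [Jact]; ring
  rw [Jact]
  linear_combination hV / 2 + hL / 2

lemma Jact_Phi_congr {σ σ' : Fin ℓ → ℝ} (i : Fin ℓ) (h : ∀ j ≤ i, σ j = σ' j) :
    Jact l c i (Phi c σ) = Jact l c i (Phi c σ') := by
  induction i using WellFoundedLT.induction with
  | _ i ih =>
    rw [Jact_Phi, Jact_Phi, h i le_rfl,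
      Lfun_congr l c i fun j hj => ih j hj fun k hk => h k (hk.trans hj.le)]

lemma differentiable_Jact_Phi (i : Fin ℓ) : Differentiable ℝ fun σ => Jact l c i (Phi c σ) :=
  (differentiable_Jact l c i).comp (differentiable_Phi c)

lemma fderiv_Jact_Phi_apply_single_of_lt (σ : Fin ℓ → ℝ) {i k : Fin ℓ} (hik : i < k) :
    fderiv ℝ (fun σ => Jact l c i (Phi c σ)) σ (Pi.single k 1) = 0 := by
  refine ((differentiable_Jact_Phi l c i σ).hasFDerivAt.hasLineDerivAt _).unique ?_
  have hconst : (fun t : ℝ => Jact l c i (Phi c (σ + t • Pi.single k 1))) =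
      fun _ => Jact l c i (Phi c σ) :=
    funext fun t => Jact_Phi_congr l c i fun j hj => by
      simp [(hj.trans_lt hik).ne]
  rw [HasLineDerivAt, hconst]
  exact hasDerivAt_const _ _

lemma fderiv_Jact_Phi_apply_single_self (σ : Fin ℓ → ℝ) (i : Fin ℓ) :
    fderiv ℝ (fun σ => Jact l c i (Phi c σ)) σ (Pi.single i 1) =
      ((l i : ℝ) - Lfun l c i (Phi c σ)) * (2 * (Jfun (σ i) * (1 - Jfun (σ i)))) := by
  refine ((differentiable_Jact_Phi l c i σ).hasFDerivAt.hasLineDerivAt _).unique ?_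
  have hline : (fun t : ℝ => Jact l c i (Phi c (σ + t • Pi.single i 1))) =
      fun t => ((l i : ℝ) - Lfun l c i (Phi c σ)) * Jfun (σ i + t) := by
    funext t
    rw [Jact_Phi, Lfun_congr l c i (τ' := Phi c σ) fun j hj => Jact_Phi_congr l c j fun k hk => by
      simp [(hk.trans_lt hj).ne]]
    simp
  rw [HasLineDerivAt, hline]
  exact ((hasDerivAt_Jfun _).comp_const_add _ _ |>.congr_deriv (by rw [add_zero])).const_mul _

lemma det_jacobian_Phi (σ : Fin ℓ → ℝ) : (jacobian (Phi c) σ).det = 1 := by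
  rw [Matrix.det_of_isUpperTriangular]
  · exact Finset.prod_eq_one fun i _ => by simp [jacobian, fderiv_Phi_apply_single]
  · intro m k (hkm : k < m)
    simp [jacobian, fderiv_Phi_apply_single, hkm.ne', hkm.not_gt]

lemma det_jacobian_Jmap_Phi_pos (hpos : ∀ τ : Fin ℓ → ℝ, ∀ j : Fin ℓ, 0 < (l j : ℝ) - Lfun l c j τ)
    (σ : Fin ℓ → ℝ) : 0 < (jacobian (fun σ => Jmap l c (Phi c σ)) σ).det := by
  rw [Matrix.det_of_isLowerTriangular]
  · refine Finset.prod_pos fun i _ => ?_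
    obtain ⟨h0, h1⟩ := Jfun_mem_Ioo (σ i)
    simp only [jacobian, Matrix.of_apply, Jmap, fderiv_Jact_Phi_apply_single_self]
    exact mul_pos (hpos _ i) (by nlinarith)
  · intro i k hik
    exact fderiv_Jact_Phi_apply_single_of_lt l c σ hik

lemma det_jacobian_Jmap_pos (hpos : ∀ τ : Fin ℓ → ℝ, ∀ j : Fin ℓ, 0 < (l j : ℝ) - Lfun l c j τ)
    (τ : Fin ℓ → ℝ) : 0 < (jacobian (Jmap l c) τ).det := by
  rw [← Phi_Psi c τ, ← mul_one (jacobian _ _).det, ← det_jacobian_Phi c (Psi c τ),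
    ← Matrix.det_mul, ← jacobian_comp (differentiable_Jmap l c _) (differentiable_Phi c _)]
  exact det_jacobian_Jmap_Phi_pos l c hpos _

lemma Jmap_injective (hpos : ∀ τ : Fin ℓ → ℝ, ∀ j : Fin ℓ, 0 < (l j : ℝ) - Lfun l c j τ) :
    Function.Injective (Jmap l c) := by
  intro τ τ' h
  rw [← Phi_Psi c τ, ← Phi_Psi c τ'] at h ⊢
  congr 1
  funext i
  have hi := congrFun h i
  simp only [Jmap, Jact_Phi, Lfun_congr l c i fun j _ => congrFun h j] at hi
  exact Jfun_injective (mul_left_cancel₀ (hpos _ i).ne' hi)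

def momentPolytope : Set (Fin ℓ → ℝ) :=
  {x | ∀ j, 0 ≤ x j ∧
    x j ≤ (l j : ℝ) - ∑ i ∈ Finset.univ.filter (fun i => i < j), (c j i : ℝ) * x i}

def openMomentPolytope : Set (Fin ℓ → ℝ) :=
  {x | ∀ j, 0 < x j ∧
    x j < (l j : ℝ) - ∑ i ∈ Finset.univ.filter (fun i => i < j), (c j i : ℝ) * x i}

lemma range_Jmap (hpos : ∀ τ : Fin ℓ → ℝ, ∀ j : Fin ℓ, 0 < (l j : ℝ) - Lfun l c j τ) :
    Set.range (Jmap l c) = openMomentPolytope l c := by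
  ext x
  constructor
  · rintro ⟨τ, rfl⟩ i
    rw [← Phi_Psi c τ]
    obtain ⟨h0, h1⟩ := Jfun_mem_Ioo (Psi c τ i)
    show 0 < Jact l c i _ ∧ Jact l c i _ < (l i : ℝ) - Lfun l c i _
    rw [Jact_Phi]
    exact ⟨mul_pos (hpos _ i) h0, mul_lt_of_lt_one_right (hpos _ i) h1⟩
  · intro hx
    set d : Fin ℓ → ℝ := fun i =>
      (l i : ℝ) - ∑ j ∈ Finset.univ.filter (fun j => j < i), (c i j : ℝ) * x j
    have hd (i : Fin ℓ) : 0 < d i := (hx i).1.trans (hx i).2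
    have hdiv (i : Fin ℓ) : x i / d i ∈ Set.Ioo 0 1 :=
      ⟨div_pos (hx i).1 (hd i), (div_lt_one (hd i)).2 (hx i).2⟩
    choose σ hσ using fun i => (range_Jfun ▸ hdiv i : x i / d i ∈ Set.range Jfun)
    refine ⟨Phi c σ, funext fun i => ?_⟩
    induction i using WellFoundedLT.induction with
    | _ i ih =>
      have hL : Lfun l c i (Phi c σ) =
          ∑ j ∈ Finset.univ.filter (fun j => j < i), (c i j : ℝ) * x j :=
        Finset.sum_congr rfl fun j hj => by rw [← ih j (Finset.mem_filter.1 hj).2]; rfl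
      rw [Jmap, Jact_Phi, hL, hσ]
      exact mul_div_cancel₀ _ (hd i).ne'

lemma openMomentPolytope_ae_eq : openMomentPolytope l c =ᵐ[volume] momentPolytope l c := by
  have hsub : openMomentPolytope l c ⊆ momentPolytope l c := fun x hx j =>
    ⟨(hx j).1.le, (hx j).2.le⟩
  rw [← measure_symmDiff_eq_zero_iff, symmDiff_of_le hsub]
  let g (j : Fin ℓ) : (Fin ℓ → ℝ) →ₗ[ℝ] ℝ :=
    LinearMap.proj j + ∑ i ∈ Finset.univ.filter (fun i => i < j), (c j i : ℝ) • LinearMap.proj i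
  have hg (j : Fin ℓ) (x : Fin ℓ → ℝ) :
      g j x = x j + ∑ i ∈ Finset.univ.filter (fun i => i < j), (c j i : ℝ) * x i := by
    simp [g]
  refine measure_mono_null (t := ⋃ j, {x | LinearMap.proj j x = 0} ∪ {x | g j x = l j}) ?_ <|
    measure_iUnion_null fun j => measure_union_null
      (addHaar_setOf_linearMap_eq _ (u := Pi.single j 1) (by simp) _)
      (addHaar_setOf_linearMap_eq _ (u := Pi.single j 1) (by simp [hg, Pi.single_apply]) _)
  rintro x ⟨hx, hx'⟩
  obtain ⟨j, hj⟩ := not_forall.1 hx'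
  refine Set.mem_iUnion.2 ⟨j, ?_⟩
  simp only [Set.mem_union, Set.mem_ofPred_eq, LinearMap.proj_apply, hg]
  by_contra! h
  exact hj ⟨(hx j).1.lt_of_ne' h.1, (hx j).2.lt_of_ne fun e => h.2 (by linarith)⟩

end Action

theorem classical_partition_function_as_polytope_integral_general {ℓ : ℕ}
    (l : Fin ℓ → ℤ) (c : Fin ℓ → Fin ℓ → ℤ)
    (hpos : ∀ τ : Fin ℓ → ℝ, ∀ j : Fin ℓ, 0 < (l j : ℝ) - Lfun l c j τ)
    (H : Fin ℓ → ℝ) (β : ℝ) :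
    (∫ τ : Fin ℓ → ℝ,
        Real.exp (-β * ∑ i, H i * Jact l c i τ) *
          (Matrix.of fun i j : Fin ℓ =>
            fderiv ℝ (Jact l c j) τ (Pi.single i 1)).det) =
      ∫ x in {x : Fin ℓ → ℝ | ∀ j : Fin ℓ, 0 ≤ x j ∧ x j ≤ (l j : ℝ) -
          ∑ i ∈ Finset.univ.filter (fun i => i < j), (c j i : ℝ) * x i},
        Real.exp (-β * ∑ i, H i * x i) := by
  have hchange := integral_image_eq_integral_abs_det_fderiv_smul volume MeasurableSet.univ
    (fun τ _ => (differentiable_Jmap l c τ).hasFDerivAt.hasFDerivWithinAt)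
    (Jmap_injective l c hpos).injOn fun x => Real.exp (-β * ∑ i, H i * x i)
  rw [Set.image_univ, range_Jmap l c hpos, Measure.restrict_univ] at hchange
  change _ = ∫ x in momentPolytope l c, _
  rw [← setIntegral_congr_set (openMomentPolytope_ae_eq l c), hchange]
  congr 1
  funext τ
  rw [det_fderiv_eq_det_jacobian (differentiable_Jmap l c τ),
    abs_of_pos (det_jacobian_Jmap_pos l c hpos τ), smul_eq_mul, mul_comm,
    ← Matrix.det_transpose]
  rfl

/-- Section 7: the classical partition function, written on the dense chart in
the action coordinates, equals the Laplace transform of the indicator function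
of the moment polytope `Δ`:
`∫_{ℝ^ℓ} e^{−β⟨H,J(τ)⟩} det(∂J_j/∂τ_i) dτ = ∫_Δ e^{−β⟨H,x⟩} dx`. -/
theorem classical_partition_function_as_polytope_integral {ℓ : ℕ}
    (l : Fin ℓ → ℤ) (c : Fin ℓ → Fin ℓ → ℤ)
    (hpos : ∀ τ : Fin ℓ → ℝ, ∀ j : Fin ℓ, 0 < (l j : ℝ) - Lfun l c j τ)
    (H : Fin ℓ → ℝ) (β : ℝ) (hβ : 0 < β) :
    (∫ τ : Fin ℓ → ℝ,
        Real.exp (-β * ∑ i, H i * Jact l c i τ) *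
          (Matrix.of fun i j : Fin ℓ =>
            fderiv ℝ (Jact l c j) τ (Pi.single i 1)).det) =
      ∫ x in {x : Fin ℓ → ℝ | ∀ j : Fin ℓ, 0 ≤ x j ∧ x j ≤ (l j : ℝ) -
          ∑ i ∈ Finset.univ.filter (fun i => i < j), (c j i : ℝ) * x i},
        Real.exp (-β * ∑ i, H i * x i) :=
  classical_partition_function_as_polytope_integral_general l c hpos H β
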